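/- Define for m ≥ 1 and 0 ≤ k ≤ m-1: b_{-1}^{(m)} = Z(m+1)/(12√3·Z(m)) and b_k^{(m)} = Z(k+1)·Z(m-k)/Z(m). Then for each m ≥ 2, b_{-1}^{(m)} + Σ_{k=0}^{m-1} b_k^{(m)} + 1_{m=2}/Z(2) = 1, i.e. the one-step peeling transition probabilities sum to 1 (where the term 1/Z(2) appears only for m = 2). -/

import Mathlib

/-!
With Catalan numbers `Cₐ`, the closed form of `Z` reads
`Z(a + 2) = (3√3/2)·3ᵃ·Cₐ/(a + 2) = (√3/4)·3ᵃ·dₐ`, where `dₐ = catalanComb a = 4Cₐ - Cₐ₊₁`.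
Multiplied by `Z(m)`, the identity becomes the recurrence
`Z(m+1)/(12√3) + ∑_{k<m} Z(k+1)·Z(m-k) + [m = 2] = Z(m)`.
The two terms of the sum containing `Z(1)` are explicit, and the remaining ones form the
convolution `∑_{i+j=n} dᵢdⱼ`, which Catalan's recursion `∑_{i+j=n} CᵢCⱼ = Cₙ₊₁` evaluates to
`6dₙ₊₁ - dₙ₊₂`. The case `m = 2` is a direct computation.
-/

/-- `Z(1) = (2-√3)/4` and `Z(p) = 6^p·(2p-5)!!/(8√3·p!)` for `p ≥ 2`. -/
noncomputable def Zfun : ℕ → ℝ := fun p =>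
  if p = 1 then (2 - Real.sqrt 3) / 4
  else 6 ^ p * Nat.doubleFactorial (2 * p - 5) / (8 * Real.sqrt 3 * Nat.factorial p)

open Finset Nat

theorem Finset.Nat.sum_antidiagonal_add_two {M : Type*} [AddCommMonoid M] (f : ℕ × ℕ → M)
    (n : ℕ) : ∑ p ∈ antidiagonal (n + 2), f p =
      f (0, n + 2) + f (n + 2, 0) + ∑ p ∈ antidiagonal n, f (p.1 + 1, p.2 + 1) := by
  rw [Finset.Nat.sum_antidiagonal_succ, Finset.Nat.sum_antidiagonal_succ', ← add_assoc]

theorem add_two_mul_catalan_succ (n : ℕ) :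
    (n + 2) * catalan (n + 1) = 2 * (2 * n + 1) * catalan n := by
  refine Nat.eq_of_mul_eq_mul_left n.succ_pos ?_
  calc (n + 1) * ((n + 2) * catalan (n + 1)) = (n + 1) * centralBinom (n + 1) := by
        rw [← succ_mul_catalan_eq_centralBinom]
    _ = (n + 1) * (2 * (2 * n + 1) * catalan n) := by
        rw [succ_mul_centralBinom_succ, ← succ_mul_catalan_eq_centralBinom]; ring

section CatalanConvolution

variable {R : Type*} [CommRing R]

theorem sum_antidiagonal_catalan_mul_catalan (n : ℕ) :
    ∑ p ∈ antidiagonal n, (catalan p.1 : R) * catalan p.2 = catalan (n + 1) := by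
  rw [catalan_succ']; push_cast; rfl

theorem sum_antidiagonal_catalan_succ_mul_catalan (n : ℕ) :
    ∑ p ∈ antidiagonal n, (catalan (p.1 + 1) : R) * catalan p.2 =
      catalan (n + 2) - catalan (n + 1) := by
  rw [← sum_antidiagonal_catalan_mul_catalan, Finset.Nat.sum_antidiagonal_succ]
  simp

theorem sum_antidiagonal_catalan_succ_mul_catalan_succ (n : ℕ) :
    ∑ p ∈ antidiagonal n, (catalan (p.1 + 1) : R) * catalan (p.2 + 1) =
      catalan (n + 3) - 2 * catalan (n + 2) := by
  rw [← sum_antidiagonal_catalan_mul_catalan, Finset.Nat.sum_antidiagonal_add_two]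
  simp only [catalan_zero, cast_one, one_mul, mul_one]
  ring

variable (R) in
def catalanComb (a : ℕ) : R := 4 * catalan a - catalan (a + 1)

theorem add_two_mul_catalanComb (a : ℕ) : (a + 2) * catalanComb R a = 6 * catalan a := by
  have h : ((a : R) + 2) * catalan (a + 1) = 2 * (2 * a + 1) * catalan a := by
    exact_mod_cast congrArg (Nat.cast : ℕ → R) (add_two_mul_catalan_succ a)
  rw [catalanComb]; linear_combination (-1 : R) * h

theorem sum_antidiagonal_catalanComb_mul_catalanComb (n : ℕ) :
    ∑ p ∈ antidiagonal n, catalanComb R p.1 * catalanComb R p.2 =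
      6 * catalanComb R (n + 1) - catalanComb R (n + 2) := by
  have expand (p : ℕ × ℕ) : catalanComb R p.1 * catalanComb R p.2 =
      16 * ((catalan p.1 : R) * catalan p.2) - 4 * ((catalan (p.1 + 1) : R) * catalan p.2) -
        4 * ((catalan (p.2 + 1) : R) * catalan p.1) +
        (catalan (p.1 + 1) : R) * catalan (p.2 + 1) := by
    simp only [catalanComb]; ring
  have swap := Finset.Nat.sum_antidiagonal_swap (n := n)
    (f := fun p => (catalan (p.1 + 1) : R) * catalan p.2)
  simp only [Prod.fst_swap, Prod.snd_swap] at swap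
  rw [sum_congr rfl fun p _ => expand p, sum_add_distrib, sum_sub_distrib, sum_sub_distrib,
    ← mul_sum, ← mul_sum, ← mul_sum, swap, sum_antidiagonal_catalan_mul_catalan,
    sum_antidiagonal_catalan_succ_mul_catalan, sum_antidiagonal_catalan_succ_mul_catalan_succ]
  simp only [catalanComb]
  ring

end CatalanConvolution

theorem Nat.doubleFactorial_two_mul_sub_one_mul_two_pow (a : ℕ) :
    (2 * a - 1)‼ * 2 ^ a = centralBinom a * a ! := by
  refine Nat.eq_of_mul_eq_mul_right a.factorial_pos ?_
  calc (2 * a - 1)‼ * 2 ^ a * a ! = (2 * a - 1)‼ * (2 * a)‼ := by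
        rw [doubleFactorial_two_mul]; ring
    _ = (2 * a)! := by
        rcases a with _ | a
        · rfl
        · rw [show 2 * (a + 1) = 2 * a + 1 + 1 by ring, factorial_eq_mul_doubleFactorial]
          simp [mul_comm]
    _ = centralBinom a * a ! * a ! := by
        rw [centralBinom_eq_two_mul_choose, two_mul, add_choose_mul_factorial_mul_factorial]

theorem Zfun_one : Zfun 1 = (2 - Real.sqrt 3) / 4 := if_pos rfl

theorem Zfun_pos (p : ℕ) : 0 < Zfun p := by
  have h3 : Real.sqrt 3 < 2 := by
    rw [Real.sqrt_lt' two_pos]; norm_num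
  unfold Zfun
  split_ifs
  · linarith
  · have := doubleFactorial_pos (2 * p - 5)
    positivity

theorem Zfun_add_two (a : ℕ) : Zfun (a + 2) = Real.sqrt 3 / 4 * 3 ^ a * catalanComb ℝ a := by
  have hD : ((2 * a - 1)‼ : ℝ) * 2 ^ a = centralBinom a * a ! := by
    exact_mod_cast doubleFactorial_two_mul_sub_one_mul_two_pow a
  have hB : ((a : ℝ) + 1) * catalan a = centralBinom a := by
    exact_mod_cast succ_mul_catalan_eq_centralBinom a
  have hC := add_two_mul_catalanComb (R := ℝ) a
  have hs : Real.sqrt 3 * Real.sqrt 3 = 3 := Real.mul_self_sqrt (by norm_num)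
  have hfact : ((a + 2)! : ℝ) = (a + 2) * (a + 1) * a ! := by
    push_cast [factorial_succ]; ring
  rw [Zfun, if_neg (by omega), show 2 * (a + 2) - 5 = 2 * a - 1 by omega, hfact, pow_add,
    show (6 : ℝ) ^ a = 2 ^ a * 3 ^ a by rw [← mul_pow]; norm_num]
  field_simp
  linear_combination 144 * hD - 144 * (a ! : ℝ) * hB - 24 * ((a : ℝ) + 1) * a ! * hC -
    8 * ((a : ℝ) + 2) * (a + 1) * a ! * catalanComb ℝ a * hs

theorem sum_antidiagonal_Zfun_add_two_mul_Zfun_add_two (n : ℕ) :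
    ∑ p ∈ antidiagonal n, Zfun (p.1 + 2) * Zfun (p.2 + 2) =
      3 / 16 * 3 ^ n * (6 * catalanComb ℝ (n + 1) - catalanComb ℝ (n + 2)) := by
  have hs : Real.sqrt 3 * Real.sqrt 3 = 3 := Real.mul_self_sqrt (by norm_num)
  have term (p : ℕ × ℕ) (hp : p ∈ antidiagonal n) : Zfun (p.1 + 2) * Zfun (p.2 + 2) =
      3 / 16 * 3 ^ n * (catalanComb ℝ p.1 * catalanComb ℝ p.2) := by
    rw [Zfun_add_two, Zfun_add_two, ← mem_antidiagonal.1 hp, pow_add]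
    linear_combination (3 : ℝ) ^ p.1 * 3 ^ p.2 * catalanComb ℝ p.1 * catalanComb ℝ p.2 / 16 * hs
  rw [sum_congr rfl term, ← mul_sum, sum_antidiagonal_catalanComb_mul_catalanComb]

theorem Zfun_recurrence (m : ℕ) (hm : 2 ≤ m) :
    Zfun (m + 1) / (12 * Real.sqrt 3) + ∑ k ∈ range m, Zfun (k + 1) * Zfun (m - k) +
      (if m = 2 then 1 else 0) = Zfun m := by
  have hs : Real.sqrt 3 * Real.sqrt 3 = 3 := Real.mul_self_sqrt (by norm_num)
  obtain rfl | hm := hm.eq_or_lt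
  · have hZ2 : Zfun 2 = Real.sqrt 3 / 4 * 3 := by
      norm_num [Zfun_add_two 0, catalanComb, catalan_one]
    have hZ3 : Zfun 3 = Real.sqrt 3 / 4 * 3 * 2 := by
      norm_num [Zfun_add_two 1, catalanComb, catalan_one, catalan_two]
    norm_num [sum_range_succ, Zfun_one, hZ2, hZ3]
    field_simp
    linear_combination -72 * hs
  · obtain ⟨n, rfl⟩ := Nat.exists_eq_add_of_le' hm
    have hsum : ∑ k ∈ range (n + 3), Zfun (k + 1) * Zfun (n + 3 - k) =
        ∑ p ∈ antidiagonal (n + 2), Zfun (p.1 + 1) * Zfun (p.2 + 1) := by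
      rw [Finset.Nat.sum_antidiagonal_eq_sum_range_succ (fun i j => Zfun (i + 1) * Zfun (j + 1))]
      refine sum_congr rfl fun k hk => ?_
      rw [show n + 3 - k = n + 2 - k + 1 by have := mem_range.1 hk; omega]
    rw [hsum, Finset.Nat.sum_antidiagonal_add_two, sum_antidiagonal_Zfun_add_two_mul_Zfun_add_two,
      if_neg (by omega), Zfun_one, show n + 3 = (n + 1) + 2 from rfl,
      show n + 1 + 2 + 1 = (n + 2) + 2 from rfl, Zfun_add_two, Zfun_add_two]
    field_simp
    linear_combination (-384 * 3 ^ (n + 1) * catalanComb ℝ (n + 1)) * hs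

/-- The one-step peeling transition probabilities along a cycle of perimeter `m ≥ 2` sum to
`1`: `b₋₁^{(m)} + Σ_{k=0}^{m-1} b_k^{(m)} + 1_{m=2}/Z(2) = 1`, where
`b₋₁^{(m)} = Z(m+1)/(12√3·Z(m))` and `b_k^{(m)} = Z(k+1)·Z(m-k)/Z(m)`. -/
theorem peeling_transitions_sum (m : ℕ) (hm : 2 ≤ m) :
    Zfun (m + 1) / (12 * Real.sqrt 3 * Zfun m) +
      (∑ k ∈ Finset.range m, Zfun (k + 1) * Zfun (m - k) / Zfun m) +
      (if m = 2 then 1 / Zfun 2 else 0) = 1 := by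
  have hZ : Zfun m ≠ 0 := (Zfun_pos m).ne'
  have hterm : (if m = 2 then 1 / Zfun 2 else 0) = (if m = 2 then 1 else 0) / Zfun m := by
    split_ifs with h
    · rw [h]
    · rw [zero_div]
  rw [hterm, ← sum_div, ← div_div, ← add_div, ← add_div, Zfun_recurrence m hm,
    div_self hZ]
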